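/- For fixed even q ≥ 4, the information rate of the NCC code, R_NCC(n,q) = (1/n)·log_q(∑_{k=1}^{q/2} k!·S(n,k)·C(q-k+1,k)), converges as n → ∞ to 1 - log_q 2, which is also the limit of the even/odd code rate 1 - ((n-1)/n)·log_q 2 and equals the rate of the all-even code. -/

import Mathlib

/-!
Write `t = q / 2` and `M n` for the number of NCC codewords. The term `k = t` of `M n` is at least
`S(n, t) ≥ t ^ (n - t)`, while `S(n, k) ≤ k ^ n ≤ t ^ n` bounds every term, so `M n` is squeezed
between two constant multiples of `t ^ n`. Hence `log_q (M n) / n → log_q t = 1 - log_q 2`.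
-/

open Filter Finset

def stirling : ℕ → ℕ → ℕ
  | 0, 0 => 1
  | 0, _ + 1 => 0
  | _ + 1, 0 => 0
  | n + 1, k + 1 => stirling n k + (k + 1) * stirling n (k + 1)

theorem stirling_eq_stirlingSecond : ∀ n k, stirling n k = Nat.stirlingSecond n k
  | 0, 0 | 0, _ + 1 | _ + 1, 0 => rfl
  | n + 1, k + 1 => by
    rw [stirling, Nat.stirlingSecond_succ_succ, stirling_eq_stirlingSecond n k,
      stirling_eq_stirlingSecond n (k + 1), add_comm]

namespace Nat

/-- `stirlingSecond n k ≤ k ^ n` alone is not preserved by the recurrence; this sharper form is. -/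
theorem stirlingSecond_succ_add_pow_le (n k : ℕ) :
    stirlingSecond n (k + 1) + k ^ n ≤ (k + 1) ^ n := by
  induction n generalizing k with
  | zero => simp
  | succ n ih =>
    have hk : stirlingSecond n k ≤ k ^ n := by
      cases k with
      | zero => cases n <;> simp
      | succ k => exact le_of_add_le_left (ih k)
    calc stirlingSecond (n + 1) (k + 1) + k ^ (n + 1)
        = stirlingSecond n k + k * k ^ n + (k + 1) * stirlingSecond n (k + 1) := by
          rw [stirlingSecond_succ_succ, pow_succ]; ring
      _ ≤ k ^ n + k * k ^ n + (k + 1) * stirlingSecond n (k + 1) := by gcongr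
      _ = (k + 1) * (stirlingSecond n (k + 1) + k ^ n) := by ring
      _ ≤ (k + 1) * (k + 1) ^ n := by gcongr; exact ih k
      _ = (k + 1) ^ (n + 1) := by ring

theorem stirlingSecond_le_pow (n k : ℕ) : stirlingSecond n k ≤ k ^ n := by
  cases k with
  | zero => cases n <;> simp
  | succ k => exact le_of_add_le_left (stirlingSecond_succ_add_pow_le n k)

theorem pow_le_pow_mul_stirlingSecond {n k : ℕ} (h : k ≤ n) :
    k ^ n ≤ k ^ k * stirlingSecond n k := by
  induction n, h using Nat.le_induction with
  | base => simp [stirlingSecond_self]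
  | succ n hkn ih =>
    rcases k.eq_zero_or_pos with rfl | hk
    · simp
    calc k ^ (n + 1) = k * k ^ n := by ring
      _ ≤ k * (k ^ k * stirlingSecond n k) := by gcongr
      _ = k ^ k * (k * stirlingSecond n k) := by ring
      _ ≤ k ^ k * stirlingSecond (n + 1) k := by
        rw [stirlingSecond_succ_left n k hk.ne']
        exact Nat.mul_le_mul_left _ (Nat.le_add_right _ _)

end Nat

def nccCodeSize (q n : ℕ) : ℕ :=
  ∑ k ∈ Icc 1 (q / 2), k.factorial * stirling n k * (q - k + 1).choose k

theorem nccCodeSize_le (q n : ℕ) :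
    nccCodeSize q n ≤
      (∑ k ∈ Icc 1 (q / 2), k.factorial * (q - k + 1).choose k) * (q / 2) ^ n := by
  rw [nccCodeSize, sum_mul]
  refine sum_le_sum fun k hk => ?_
  rw [stirling_eq_stirlingSecond, mul_right_comm]
  exact Nat.mul_le_mul_left _ <|
    (Nat.stirlingSecond_le_pow n k).trans (Nat.pow_le_pow_left (mem_Icc.1 hk).2 n)

theorem pow_le_mul_nccCodeSize {q n : ℕ} (hq : 2 ≤ q) (hn : q / 2 ≤ n) :
    (q / 2) ^ n ≤ (q / 2) ^ (q / 2) * nccCodeSize q n := by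
  set t := q / 2
  have hweight : 0 < t.factorial * (q - t + 1).choose t :=
    Nat.mul_pos (Nat.factorial_pos _) (Nat.choose_pos (by omega))
  calc t ^ n ≤ t ^ t * stirling n t := by
        rw [stirling_eq_stirlingSecond]; exact Nat.pow_le_pow_mul_stirlingSecond hn
    _ ≤ t ^ t * (t.factorial * stirling n t * (q - t + 1).choose t) := by
        rw [mul_right_comm _ (stirling n t)]
        exact Nat.mul_le_mul_left _ (Nat.le_mul_of_pos_left _ hweight)
    _ ≤ t ^ t * nccCodeSize q n := by
        exact Nat.mul_le_mul_left _ <|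
          single_le_sum (f := fun k => k.factorial * stirling n k * (q - k + 1).choose k)
            (fun _ _ => Nat.zero_le _) (mem_Icc.2 ⟨by omega, le_rfl⟩)

theorem tendsto_log_div_of_pow_le_mul_of_le_mul_pow {a : ℕ → ℝ} {b c C : ℝ} (hb : 0 < b)
    (hc : 0 < c) (hlow : ∀ᶠ n in atTop, b ^ n ≤ c * a n)
    (hup : ∀ᶠ n in atTop, a n ≤ C * b ^ n) :
    Tendsto (fun n => Real.log (a n) / n) atTop (nhds (Real.log b)) := by
  have hlim (d : ℝ) : Tendsto (fun n : ℕ => d / n + Real.log b) atTop (nhds (Real.log b)) := by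
    simpa using (tendsto_const_div_atTop_nhds_zero_nat d).add_const (Real.log b)
  refine tendsto_of_tendsto_of_tendsto_of_le_of_le' (hlim (-Real.log c)) (hlim (Real.log C))
    ?_ ?_
  all_goals
    filter_upwards [hlow, hup, eventually_gt_atTop 0] with n hlow hup hn
    have hbn : 0 < b ^ n := pow_pos hb n
    have ha : 0 < a n := pos_of_mul_pos_right (hbn.trans_le hlow) hc.le
    have hC : 0 < C := pos_of_mul_pos_left (ha.trans_le hup) hbn.le
    have hn' : (0 : ℝ) < n := Nat.cast_pos.2 hn
    rw [div_add' _ _ _ hn'.ne', div_le_div_iff_of_pos_right hn']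
  · have := Real.log_le_log (by positivity) hlow
    rw [Real.log_mul hc.ne' ha.ne', Real.log_pow] at this
    linarith
  · have := Real.log_le_log ha hup
    rw [Real.log_mul hC.ne' hbn.ne', Real.log_pow] at this
    linarith

theorem logb_natCast_div_two {q : ℕ} (hq : Even q) (hq2 : 2 ≤ q) :
    Real.logb q ((q / 2 : ℕ) : ℝ) = 1 - Real.logb q 2 := by
  have hq1 : (1 : ℝ) < q := by exact_mod_cast hq2
  rw [Nat.cast_div hq.two_dvd two_ne_zero, Nat.cast_ofNat,
    Real.logb_div (by positivity) two_ne_zero, Real.logb_self_eq_one hq1]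

/-- For fixed even `q ≥ 4`, the NCC information rate tends to `1 - log_q 2` as
`n → ∞`; this is also the limit of the even/odd rate `1 - ((n-1)/n)·log_q 2`
and equals the (constant) rate of the all-even code. -/
theorem ncc_rate_tendsto (q : ℕ) (hq : Even q) (hq4 : 4 ≤ q) :
    Tendsto (fun n : ℕ =>
        Real.logb q ((∑ k ∈ Finset.Icc 1 (q / 2),
          Nat.factorial k * stirling n k * Nat.choose (q - k + 1) k : ℕ) : ℝ)
          / (n : ℝ))
      atTop (nhds (1 - Real.logb q 2)) ∧
    Tendsto (fun n : ℕ => 1 - ((n : ℝ) - 1) / (n : ℝ) * Real.logb q 2)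
      atTop (nhds (1 - Real.logb q 2)) ∧
    ∀ n : ℕ, 1 ≤ n →
      Real.logb q (((q / 2 : ℕ) : ℝ) ^ n) / (n : ℝ) = 1 - Real.logb q 2 := by
  have hq2 : 2 ≤ q := by omega
  have ht : 0 < q / 2 := by omega
  refine ⟨?_, ?_, fun n hn => ?_⟩
  · have hrate := tendsto_log_div_of_pow_le_mul_of_le_mul_pow
      (a := fun n => (nccCodeSize q n : ℝ)) (b := ((q / 2 : ℕ) : ℝ))
      (c := ((q / 2) ^ (q / 2) : ℕ))
      (C := ((∑ k ∈ Icc 1 (q / 2), k.factorial * (q - k + 1).choose k : ℕ)))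
      (Nat.cast_pos.2 ht) (Nat.cast_pos.2 (pow_pos ht _))
      ((eventually_ge_atTop (q / 2)).mono fun n hn => by
        exact_mod_cast pow_le_mul_nccCodeSize hq2 hn)
      (.of_forall fun n => by exact_mod_cast nccCodeSize_le q n)
    rw [← logb_natCast_div_two hq hq2]
    simpa only [Real.logb, div_right_comm, nccCodeSize] using hrate.div_const (Real.log q)
  · have h : Tendsto (fun n : ℕ => ((n : ℝ) - 1) / n) atTop (nhds 1) := by
      simpa [neg_add_eq_sub] using
        tendsto_add_mul_div_add_mul_atTop_nhds (-1 : ℝ) 0 1 one_ne_zero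
    simpa using tendsto_const_nhds.sub (h.mul_const (Real.logb q 2))
  · rw [Real.logb_pow, logb_natCast_div_two hq hq2]
    field_simp
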